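/- arXiv:1204.5541 — 2 statements merged into one kernel-verified Lean document; each statement's English description precedes it below -/
import Mathlib

section
/- Let e be a simple list expression (it contains no arithmetic operators, at most one occurrence of a list variable, and each string subexpression of e contains at most one occurrence of a string variable). If α and β are assignments such that the evaluations e^α and e^β are equal, then α(x) = β(x) for every variable x occurring in e. Consequently, for a fixed value v there is at most one assignment of the variables occurring in e under which e evaluates to v. -/
section GP2Expressions

/- GP 2 list expressions over disjoint variable sets IVar (integer variables),
   SVar (string variables), AVar (atom variables), LVar (list variables) and a
   fixed character set Char'. -/
variable (IVar SVar AVar LVar Char' : Type)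

/-- Binary arithmetic operators +, -, *, /. -/
inductive ArithOp : Type where
  | add | sub | mul | div

/-- Integer expressions: integer constants (including degree constants, which
    are treated as fixed integers), integer variables, negation and binary
    arithmetic operations. -/
inductive IExpr : Type where
  | const : ℤ → IExpr
  | ivar  : IVar → IExpr
  | neg   : IExpr → IExpr
  | binop : ArithOp → IExpr → IExpr → IExpr

/-- String expressions: string constants, string variables, concatenations. -/
inductive SExpr : Type where
  | const  : List Char' → SExpr
  | svar   : SVar → SExpr
  | concat : SExpr → SExpr → SExpr

/-- Atom expressions: integer expressions, string expressions, atom variables. -/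
inductive AExpr : Type where
  | int  : IExpr IVar → AExpr
  | str  : SExpr SVar Char' → AExpr
  | avar : AVar → AExpr

/-- List expressions: empty, atoms, list variables, concatenations. -/
inductive LExpr : Type where
  | empty  : LExpr
  | atom   : AExpr IVar SVar AVar Char' → LExpr
  | lvar   : LVar → LExpr
  | concat : LExpr → LExpr → LExpr

/-- Atom values: integers or character strings. -/
abbrev AtomVal : Type := ℤ ⊕ List Char'

/-- An assignment maps integer variables to integers, string variables to
    strings, atom variables to atom values and list variables to finite
    sequences of atom values. -/
structure Assignment : Type where
  i : IVar → ℤ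
  s : SVar → List Char'
  a : AVar → AtomVal Char'
  l : LVar → List (AtomVal Char')

variable {IVar SVar AVar LVar Char'}

/-- Integer semantics of the arithmetic operators. -/
def ArithOp.eval : ArithOp → ℤ → ℤ → ℤ
  | .add => (· + ·)
  | .sub => (· - ·)
  | .mul => (· * ·)
  | .div => (· / ·)

/-- Evaluation of integer expressions. -/
def IExpr.eval (α : Assignment IVar SVar AVar LVar Char') : IExpr IVar → ℤ
  | .const n => n
  | .ivar x => α.i x
  | .neg e => - e.eval α
  | .binop op e₁ e₂ => op.eval (e₁.eval α) (e₂.eval α)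

/-- Evaluation of string expressions ('.' is string concatenation). -/
def SExpr.eval (α : Assignment IVar SVar AVar LVar Char') :
    SExpr SVar Char' → List Char'
  | .const s => s
  | .svar x => α.s x
  | .concat e₁ e₂ => e₁.eval α ++ e₂.eval α

/-- Evaluation of atom expressions. -/
def AExpr.eval (α : Assignment IVar SVar AVar LVar Char') :
    AExpr IVar SVar AVar Char' → AtomVal Char'
  | .int e => Sum.inl (e.eval α)
  | .str e => Sum.inr (e.eval α)
  | .avar x => α.a x

/-- Evaluation of list expressions in (ℤ ∪ Char'*)*; an atom value is
    identified with the length-one sequence containing it, and ':' is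
    sequence concatenation. -/
def LExpr.eval (α : Assignment IVar SVar AVar LVar Char') :
    LExpr IVar SVar AVar LVar Char' → List (AtomVal Char')
  | .empty => []
  | .atom a => [a.eval α]
  | .lvar x => α.l x
  | .concat e₁ e₂ => e₁.eval α ++ e₂.eval α

/-- An integer expression contains no arithmetic operators (no negation and
    no binary operation) iff it is a constant or a variable. -/
def IExpr.noArith : IExpr IVar → Prop
  | .const _ => True
  | .ivar _ => True
  | .neg _ => False
  | .binop _ _ _ => False

/-- Number of occurrences of string variables in a string expression. -/
def SExpr.svarOccCount : SExpr SVar Char' → ℕ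
  | .const _ => 0
  | .svar _ => 1
  | .concat e₁ e₂ => e₁.svarOccCount + e₂.svarOccCount

/-- Number of occurrences of list variables in a list expression. -/
def LExpr.lvarOccCount : LExpr IVar SVar AVar LVar Char' → ℕ
  | .empty => 0
  | .atom _ => 0
  | .lvar _ => 1
  | .concat e₁ e₂ => e₁.lvarOccCount + e₂.lvarOccCount

/-- Every atom occurring in the list expression satisfies: integer
    subexpressions contain no arithmetic operators, and string subexpressions
    contain at most one occurrence of a string variable. -/
def LExpr.atomsSimple : LExpr IVar SVar AVar LVar Char' → Prop
  | .empty => True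
  | .atom (.int e) => e.noArith
  | .atom (.str e) => e.svarOccCount ≤ 1
  | .atom (.avar _) => True
  | .lvar _ => True
  | .concat e₁ e₂ => e₁.atomsSimple ∧ e₂.atomsSimple

/-- A list expression is simple if (1) it contains no arithmetic operators,
    (2) it contains at most one occurrence of a list variable, and (3) each
    occurrence of a string expression in it contains at most one occurrence of
    a string variable. -/
def LExpr.Simple (e : LExpr IVar SVar AVar LVar Char') : Prop :=
  e.atomsSimple ∧ e.lvarOccCount ≤ 1

/-- Occurrences of integer variables in a list expression. -/
def LExpr.ivarOccs : LExpr IVar SVar AVar LVar Char' → List IVar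
  | .empty => []
  | .atom (.int e) =>
      (let rec go : IExpr IVar → List IVar
        | .const _ => []
        | .ivar x => [x]
        | .neg e => go e
        | .binop _ e₁ e₂ => go e₁ ++ go e₂
      go e)
  | .atom _ => []
  | .lvar _ => []
  | .concat e₁ e₂ => e₁.ivarOccs ++ e₂.ivarOccs

/-- Occurrences of string variables in a list expression. -/
def LExpr.svarOccs : LExpr IVar SVar AVar LVar Char' → List SVar
  | .empty => []
  | .atom (.str e) =>
      (let rec go : SExpr SVar Char' → List SVar
        | .const _ => []
        | .svar x => [x]
        | .concat e₁ e₂ => go e₁ ++ go e₂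
      go e)
  | .atom _ => []
  | .lvar _ => []
  | .concat e₁ e₂ => e₁.svarOccs ++ e₂.svarOccs

/-- Occurrences of atom variables in a list expression. -/
def LExpr.avarOccs : LExpr IVar SVar AVar LVar Char' → List AVar
  | .empty => []
  | .atom (.avar x) => [x]
  | .atom _ => []
  | .lvar _ => []
  | .concat e₁ e₂ => e₁.avarOccs ++ e₂.avarOccs

/-- Occurrences of list variables in a list expression. -/
def LExpr.lvarOccs : LExpr IVar SVar AVar LVar Char' → List LVar
  | .empty => []
  | .atom _ => []
  | .lvar x => [x]
  | .concat e₁ e₂ => e₁.lvarOccs ++ e₂.lvarOccs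

/-- Two assignments agree on every variable occurring in `e`. -/
def AgreeOn (α β : Assignment IVar SVar AVar LVar Char')
    (e : LExpr IVar SVar AVar LVar Char') : Prop :=
  (∀ x ∈ e.ivarOccs, α.i x = β.i x) ∧
  (∀ x ∈ e.svarOccs, α.s x = β.s x) ∧
  (∀ x ∈ e.avarOccs, α.a x = β.a x) ∧
  (∀ x ∈ e.lvarOccs, α.l x = β.l x)

/-
Concatenation of lists is injective as soon as one pair of corresponding
factors has equal lengths. In a simple expression at most one factor of every
concatenation contains a variable whose value can change the length (a string
variable inside a string expression, a list variable inside a list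
expression); the other factor evaluates to a list of fixed length. So an
equation e^α = e^β splits all the way down the syntax tree, and at the leaves,
where no arithmetic operators occur, it equates the values of the variables.
-/

theorem List.append_inj_of_length_eq_or {α : Type*} {s₁ t₁ s₂ t₂ : List α}
    (h : s₁ ++ t₁ = s₂ ++ t₂) (hl : s₁.length = s₂.length ∨ t₁.length = t₂.length) :
    s₁ = s₂ ∧ t₁ = t₂ :=
  hl.elim (List.append_inj h) (List.append_inj' h)

variable {α β : Assignment IVar SVar AVar LVar Char'}

theorem IExpr.agree_on_ivarOccs_of_eval_eq {e : IExpr IVar} (h : e.noArith)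
    (heq : e.eval α = e.eval β) : ∀ x ∈ LExpr.ivarOccs.go e, α.i x = β.i x := by
  cases e with
  | const => simp [LExpr.ivarOccs.go]
  | ivar x => simpa [LExpr.ivarOccs.go, IExpr.eval] using heq
  | neg | binop => exact h.elim

theorem SExpr.eval_eq_of_svarOccCount_eq_zero {e : SExpr SVar Char'}
    (h : e.svarOccCount = 0) : e.eval α = e.eval β := by
  induction e with
  | const => rfl
  | svar => simp [SExpr.svarOccCount] at h
  | concat e₁ e₂ ih₁ ih₂ =>
    simp only [SExpr.svarOccCount, Nat.add_eq_zero_iff] at h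
    simp only [SExpr.eval, ih₁ h.1, ih₂ h.2]

theorem SExpr.agree_on_svarOccs_of_eval_eq {e : SExpr SVar Char'} (h : e.svarOccCount ≤ 1)
    (heq : e.eval α = e.eval β) : ∀ x ∈ LExpr.svarOccs.go e, α.s x = β.s x := by
  induction e with
  | const => simp [LExpr.svarOccs.go]
  | svar x => simpa [LExpr.svarOccs.go, SExpr.eval] using heq
  | concat e₁ e₂ ih₁ ih₂ =>
    simp only [SExpr.svarOccCount] at h
    have hlen : (e₁.eval α).length = (e₁.eval β).length ∨
        (e₂.eval α).length = (e₂.eval β).length := by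
      rcases Nat.eq_zero_or_pos e₁.svarOccCount with h₁ | _
      · exact .inl (congrArg List.length (eval_eq_of_svarOccCount_eq_zero h₁))
      · exact .inr (congrArg List.length (eval_eq_of_svarOccCount_eq_zero (by omega)))
    obtain ⟨heq₁, heq₂⟩ := List.append_inj_of_length_eq_or heq hlen
    simp only [LExpr.svarOccs.go, List.mem_append]
    rintro x (hx | hx)
    exacts [ih₁ (by omega) heq₁ x hx, ih₂ (by omega) heq₂ x hx]

theorem LExpr.length_eval_eq_of_lvarOccCount_eq_zero {e : LExpr IVar SVar AVar LVar Char'}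
    (h : e.lvarOccCount = 0) : (e.eval α).length = (e.eval β).length := by
  induction e with
  | empty | atom => rfl
  | lvar => simp [LExpr.lvarOccCount] at h
  | concat e₁ e₂ ih₁ ih₂ =>
    simp only [LExpr.lvarOccCount, Nat.add_eq_zero_iff] at h
    simp only [LExpr.eval, List.length_append, ih₁ h.1, ih₂ h.2]

theorem AgreeOn.concat {e₁ e₂ : LExpr IVar SVar AVar LVar Char'}
    (h₁ : AgreeOn α β e₁) (h₂ : AgreeOn α β e₂) : AgreeOn α β (e₁.concat e₂) := by
  simp only [AgreeOn, LExpr.ivarOccs, LExpr.svarOccs, LExpr.avarOccs, LExpr.lvarOccs,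
    List.mem_append, or_imp, forall_and] at *
  tauto

theorem LExpr.agreeOn_atom_of_eval_eq {a : AExpr IVar SVar AVar Char'}
    (hs : (LExpr.atom (LVar := LVar) a).atomsSimple) (heq : a.eval α = a.eval β) :
    AgreeOn α β (.atom a) := by
  cases a with
  | int e =>
    have := IExpr.agree_on_ivarOccs_of_eval_eq hs (Sum.inl_injective heq)
    simpa [AgreeOn, LExpr.ivarOccs, LExpr.svarOccs, LExpr.avarOccs, LExpr.lvarOccs]
  | str e =>
    have := SExpr.agree_on_svarOccs_of_eval_eq hs (Sum.inr_injective heq)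
    simpa [AgreeOn, LExpr.ivarOccs, LExpr.svarOccs, LExpr.avarOccs, LExpr.lvarOccs]
  | avar x =>
    simpa [AgreeOn, LExpr.ivarOccs, LExpr.svarOccs, LExpr.avarOccs, LExpr.lvarOccs,
      AExpr.eval] using heq

theorem LExpr.Simple.agreeOn_of_eval_eq {e : LExpr IVar SVar AVar LVar Char'}
    (h : e.Simple) (heq : e.eval α = e.eval β) : AgreeOn α β e := by
  obtain ⟨hs, hl⟩ := h
  induction e with
  | empty => simp [AgreeOn, LExpr.ivarOccs, LExpr.svarOccs, LExpr.avarOccs, LExpr.lvarOccs]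
  | atom a => exact agreeOn_atom_of_eval_eq hs (List.singleton_injective heq)
  | lvar x =>
    simpa [AgreeOn, LExpr.ivarOccs, LExpr.svarOccs, LExpr.avarOccs, LExpr.lvarOccs,
      LExpr.eval] using heq
  | concat e₁ e₂ ih₁ ih₂ =>
    simp only [LExpr.lvarOccCount] at hl
    have hlen : (e₁.eval α).length = (e₁.eval β).length ∨
        (e₂.eval α).length = (e₂.eval β).length := by
      rcases Nat.eq_zero_or_pos e₁.lvarOccCount with h₁ | _
      · exact .inl (length_eval_eq_of_lvarOccCount_eq_zero h₁)
      · exact .inr (length_eval_eq_of_lvarOccCount_eq_zero (by omega))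
    obtain ⟨heq₁, heq₂⟩ := List.append_inj_of_length_eq_or heq hlen
    exact (ih₁ heq₁ hs.1 (by omega)).concat (ih₂ heq₂ hs.2 (by omega))

/-- if `e` is a simple list expression and two assignments α, β
    give equal evaluations e^α = e^β, then α and β agree on every variable
    occurring in e; consequently, for a fixed value v there is at most one
    assignment of the variables occurring in e under which e evaluates to v. -/
theorem simple_list_expr_assignment_unique
    (e : LExpr IVar SVar AVar LVar Char') (hsimple : e.Simple) :
    (∀ α β : Assignment IVar SVar AVar LVar Char',
      e.eval α = e.eval β → AgreeOn α β e) ∧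
    (∀ v : List (AtomVal Char'),
      ∀ α β : Assignment IVar SVar AVar LVar Char',
        e.eval α = v → e.eval β = v → AgreeOn α β e) :=
  ⟨fun _ _ heq => hsimple.agreeOn_of_eval_eq heq,
    fun _ _ _ hα hβ => hsimple.agreeOn_of_eval_eq (hα.trans hβ.symm)⟩

end GP2Expressions
end

section
/- Correctness of the acyclicity test: let E be a directed graph on a finite vertex type V such that the rule 'delete' is not applicable, i.e. for all vertices a, b with E a b there exists a vertex c with E c a (the source of every edge has an incoming edge). Then E is acyclic if and only if E contains no edges. -/
/-! On a finite type, an acyclic relation has an irreflexive transitive closure, which is then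
well-founded, and so is the relation itself. A minimal source of an edge would have no
incoming edge, so under the hypothesis there are no edges at all. -/

open Relation

theorem Finite.wellFounded_of_forall_not_transGen_self {α : Type*} [Finite α] {r : α → α → Prop}
    (hr : ∀ x, ¬ TransGen r x x) : WellFounded r :=
  haveI : Std.Irrefl (TransGen r) := ⟨hr⟩
  Subrelation.wf TransGen.single (Finite.wellFounded_of_trans_of_irrefl (TransGen r))

theorem WellFounded.forall_not_rel_of_forall_rel_exists_rel {α : Type*} {r : α → α → Prop}
    (hwf : WellFounded r) (h : ∀ a b, r a b → ∃ c, r c a) : ∀ a b, ¬ r a b := by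
  intro a
  induction a using hwf.induction with
  | _ a ih =>
    intro b hab
    obtain ⟨c, hca⟩ := h a b hab
    exact ih c hca a hca

/-- correctness of the acyclicity test. Let `E` be a directed
    graph on a finite vertex type `V` such that the rule 'delete' is not
    applicable, i.e. the source of every edge has an incoming edge. Then `E`
    is acyclic (no vertex lies on a directed cycle, i.e. no vertex is related
    to itself by the transitive closure of `E`) iff `E` contains no edges. -/
theorem acyclic_iff_no_edges_of_delete_not_applicable
    {V : Type} [Fintype V] (E : V → V → Prop)
    (h : ∀ a b, E a b → ∃ c, E c a) :
    (¬ ∃ x, Relation.TransGen E x x) ↔ ∀ a b, ¬ E a b := by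
  constructor
  · intro hacyclic
    have hwf : WellFounded E :=
      Finite.wellFounded_of_forall_not_transGen_self fun x hx => hacyclic ⟨x, hx⟩
    exact hwf.forall_not_rel_of_forall_rel_exists_rel h
  · rintro hno ⟨x, hx⟩
    obtain ⟨y, hxy, -⟩ := TransGen.head'_iff.mp hx
    exact hno x y hxy
end
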